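/- Let d ≥ 3 and let T_R, T_B be finite nonempty sets in ℝ^d. Let π : ℝ^d → ℝ^{d−2} be the coordinate projection x ↦ (x₃, …, x_d). Then P_0(T) = ∅ if and only if the projected dataset with red set π(T_R) and blue set π(T_B) is strongly separable in ℝ^{d−2}. -/

import Mathlib

open scoped RealInnerProductSpace

/-- The vector `e(a,b) = (a, b, 0, …, 0) ∈ ℝ^d`. -/
noncomputable def evec (d : ℕ) (a b : ℝ) : EuclideanSpace ℝ (Fin d) :=
  WithLp.toLp 2 (fun i => if (i : ℕ) = 0 then a else if (i : ℕ) = 1 then b else 0)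

/-- `P_0(T) ⊆ ℙ¹(ℝ)`: the set of directions `u = [a : b]` such that there are
`r ∈ conv(T_R)`, `s ∈ conv(T_B)` and `t ∈ ℝ` with `r − s = t · e(a,b)`. -/
def P0 (d : ℕ) (TR TB : Finset (EuclideanSpace ℝ (Fin d))) :
    Set (Projectivization ℝ (Fin 2 → ℝ)) :=
  {u | ∃ (v : Fin 2 → ℝ) (hv : v ≠ 0), Projectivization.mk ℝ v hv = u ∧
    ∃ r ∈ convexHull ℝ (TR : Set (EuclideanSpace ℝ (Fin d))),
      ∃ s ∈ convexHull ℝ (TB : Set (EuclideanSpace ℝ (Fin d))),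
        ∃ t : ℝ, r - s = t • evec d (v 0) (v 1)}

/-- The coordinate projection `π : ℝ^d → ℝ^{d−2}`, `x ↦ (x₃, …, x_d)`. -/
noncomputable def projLast2 (d : ℕ) (x : EuclideanSpace ℝ (Fin d)) :
    EuclideanSpace ℝ (Fin (d - 2)) :=
  WithLp.toLp 2 (fun i => x ⟨(i : ℕ) + 2, by omega⟩)

/-! The kernel of `π` is spanned by `e(1,0)` and `e(0,1)`, so some direction lies in `P_0(T)`
exactly when `π r = π s` for some `r ∈ conv T_R`, `s ∈ conv T_B` (if `r = s`, any direction
works with `t = 0`). Hence `P_0(T) = ∅` iff `π(conv T_R) = conv π(T_R)` and `conv π(T_B)` are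
disjoint; as hulls of finite sets they are compact, so Hahn–Banach separates them strictly, and
conversely the open half-spaces of a strict separation contain the two hulls. -/

section Separation

variable {F : Type*} [NormedAddCommGroup F] [InnerProductSpace ℝ F]

theorem disjoint_convexHull_of_strict_separation {A B : Set F} {w : F} {c : ℝ}
    (hA : ∀ a ∈ A, ⟪w, a⟫ < c) (hB : ∀ b ∈ B, c < ⟪w, b⟫) :
    Disjoint (convexHull ℝ A) (convexHull ℝ B) := by
  have hAc : convexHull ℝ A ⊆ {x | ⟪w, x⟫ < c} :=
    convexHull_min hA (convex_halfSpace_lt (innerₛₗ ℝ w).isLinear c)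
  have hBc : convexHull ℝ B ⊆ {x | c < ⟪w, x⟫} :=
    convexHull_min hB (convex_halfSpace_gt (innerₛₗ ℝ w).isLinear c)
  refine Set.disjoint_left.2 fun x hxA hxB => ?_
  have hxA' : ⟪w, x⟫ < c := hAc hxA
  have hxB' : c < ⟪w, x⟫ := hBc hxB
  exact hxA'.not_gt hxB'

theorem exists_strict_separation_of_disjoint_convexHull [CompleteSpace F] {A B : Set F}
    (hAfin : A.Finite) (hBfin : B.Finite) (hA : A.Nonempty) (hB : B.Nonempty)
    (hdisj : Disjoint (convexHull ℝ A) (convexHull ℝ B)) :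
    ∃ (w : F) (c : ℝ), w ≠ 0 ∧ (∀ a ∈ A, ⟪w, a⟫ < c) ∧ ∀ b ∈ B, c < ⟪w, b⟫ := by
  obtain ⟨f, u, v, hfu, huv, hfv⟩ := geometric_hahn_banach_compact_closed
    (convex_convexHull ℝ A) (hAfin.isCompact_convexHull (𝕜 := ℝ))
    (convex_convexHull ℝ B) (hBfin.isCompact_convexHull (𝕜 := ℝ)).isClosed hdisj
  set w := (InnerProductSpace.toDual ℝ F).symm f
  have hwf (x : F) : ⟪w, x⟫ = f x := InnerProductSpace.toDual_symm_apply
  have hwA (a : F) (ha : a ∈ A) : ⟪w, a⟫ < u := hwf a ▸ hfu a (subset_convexHull ℝ A ha)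
  have hwB (b : F) (hb : b ∈ B) : v < ⟪w, b⟫ := hwf b ▸ hfv b (subset_convexHull ℝ B hb)
  refine ⟨w, u, ?_, hwA, fun b hb => huv.trans (hwB b hb)⟩
  rintro hw
  obtain ⟨a, ha⟩ := hA
  obtain ⟨b, hb⟩ := hB
  have := (hwA a ha).trans (huv.trans (hwB b hb))
  simp [hw] at this

theorem disjoint_convexHull_iff_exists_strict_separation [CompleteSpace F] {A B : Set F}
    (hAfin : A.Finite) (hBfin : B.Finite) (hA : A.Nonempty) (hB : B.Nonempty) :
    Disjoint (convexHull ℝ A) (convexHull ℝ B) ↔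
      ∃ (w : F) (c : ℝ), w ≠ 0 ∧ (∀ a ∈ A, ⟪w, a⟫ < c) ∧ ∀ b ∈ B, c < ⟪w, b⟫ :=
  ⟨exists_strict_separation_of_disjoint_convexHull hAfin hBfin hA hB,
    fun ⟨_, _, _, hwA, hwB⟩ => disjoint_convexHull_of_strict_separation hwA hwB⟩

end Separation

section Projection

variable {d : ℕ}

noncomputable def projLast2ₗ (d : ℕ) :
    EuclideanSpace ℝ (Fin d) →ₗ[ℝ] EuclideanSpace ℝ (Fin (d - 2)) where
  toFun := projLast2 d
  map_add' _ _ := rfl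
  map_smul' _ _ := rfl

theorem coe_projLast2ₗ : ⇑(projLast2ₗ d) = projLast2 d := rfl

theorem projLast2_evec (a b : ℝ) : projLast2 d (evec d a b) = 0 := by
  ext i
  simp [projLast2, evec]

theorem evec_zero_zero : evec d 0 0 = 0 := by
  ext i
  simp [evec]

theorem eq_evec_of_projLast2_eq_zero (hd : 2 ≤ d) {x : EuclideanSpace ℝ (Fin d)}
    (hx : projLast2 d x = 0) : x = evec d (x ⟨0, by omega⟩) (x ⟨1, by omega⟩) := by
  ext ⟨j, hj⟩
  simp only [evec]
  rcases j with _ | _ | j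
  · rfl
  · rfl
  · exact congrArg (fun y => y ⟨j, by omega⟩) hx

end Projection

section Directions

variable {d : ℕ} {TR TB : Finset (EuclideanSpace ℝ (Fin d))}

theorem P0_nonempty_iff (hd : 2 ≤ d) :
    (P0 d TR TB).Nonempty ↔ ∃ r ∈ convexHull ℝ (TR : Set (EuclideanSpace ℝ (Fin d))),
      ∃ s ∈ convexHull ℝ (TB : Set (EuclideanSpace ℝ (Fin d))), projLast2 d r = projLast2 d s := by
  constructor
  · rintro ⟨-, v, -, -, r, hr, s, hs, t, hrst⟩
    refine ⟨r, hr, s, hs, sub_eq_zero.1 ?_⟩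
    rw [← coe_projLast2ₗ, ← map_sub, hrst, map_smul, coe_projLast2ₗ, projLast2_evec, smul_zero]
  · rintro ⟨r, hr, s, hs, hrs⟩
    have hker : projLast2 d (r - s) = 0 := by
      rw [← coe_projLast2ₗ, map_sub, sub_eq_zero, coe_projLast2ₗ, hrs]
    set a := (r - s) ⟨0, by omega⟩
    set b := (r - s) ⟨1, by omega⟩
    have hrs_evec : r - s = evec d a b := eq_evec_of_projLast2_eq_zero hd hker
    by_cases hab : ![a, b] = 0
    · have hv : ![(1 : ℝ), 0] ≠ 0 := by simp
      refine ⟨_, _, hv, rfl, r, hr, s, hs, 0, ?_⟩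
      have ha : a = 0 := congrFun hab 0
      have hb : b = 0 := congrFun hab 1
      rw [hrs_evec, ha, hb, evec_zero_zero, zero_smul]
    · exact ⟨_, _, hab, rfl, r, hr, s, hs, 1, by simpa using hrs_evec⟩

theorem P0_eq_empty_iff_disjoint_convexHull_image (hd : 2 ≤ d) :
    P0 d TR TB = ∅ ↔
      Disjoint (convexHull ℝ (projLast2 d '' TR)) (convexHull ℝ (projLast2 d '' TB)) := by
  rw [← Set.not_nonempty_iff_eq_empty, not_iff_comm, Set.not_disjoint_iff, P0_nonempty_iff hd,
    ← coe_projLast2ₗ, ← LinearMap.image_convexHull, ← LinearMap.image_convexHull]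
  constructor
  · rintro ⟨_, ⟨r, hr, rfl⟩, s, hs, hrs⟩
    exact ⟨r, hr, s, hs, hrs.symm⟩
  · rintro ⟨r, hr, s, hs, hrs⟩
    exact ⟨_, ⟨r, hr, hrs⟩, s, hs, rfl⟩

end Directions

/-- For `d ≥ 3` and finite nonempty `T_R, T_B ⊆ ℝ^d`, one has `P_0(T) = ∅`
iff the projected dataset `(π(T_R), π(T_B))` is strongly separable in `ℝ^{d−2}`, where
`π(x) = (x₃, …, x_d)`. -/
theorem stmt_3 (d : ℕ) (hd : 3 ≤ d) (TR TB : Finset (EuclideanSpace ℝ (Fin d)))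
    (hR : TR.Nonempty) (hB : TB.Nonempty) :
    P0 d TR TB = ∅ ↔
    ∃ (w : EuclideanSpace ℝ (Fin (d - 2))) (c : ℝ), w ≠ 0 ∧
      (∀ r ∈ TR, ⟪w, projLast2 d r⟫ < c) ∧ (∀ b ∈ TB, c < ⟪w, projLast2 d b⟫) := by
  rw [P0_eq_empty_iff_disjoint_convexHull_image (by omega),
    disjoint_convexHull_iff_exists_strict_separation (TR.finite_toSet.image _)
      (TB.finite_toSet.image _) ((Finset.coe_nonempty.2 hR).image _)
      ((Finset.coe_nonempty.2 hB).image _)]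
  simp only [Set.forall_mem_image, Finset.mem_coe]
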